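/- In the two-patch setting, let α₁, α₂, β₁, β₂ : [0,1] → ℝ be C¹ with α₁(ξ)α₂(ξ) > 0 for all ξ, set β = α₁β₂ + α₂β₁, and assume the geometric gluing identity α₁(ξ)∂₂F⁽²⁾(ξ,0) + α₂(ξ)∂₁F⁽¹⁾(0,ξ) + β(ξ)∂₂F⁽¹⁾(0,ξ) = 0 for all ξ ∈ [0,1]. Let b : [0,1] → ℝ be C², let B, c₀, c₁, d : [0,1] → ℝ be C¹ with c₀(0) = 1, c₀′(0) = 0, c₁(0) = 0, c₁′(0) = 1, d(0) = 0, and define f⁽¹⁾(ξ₁,ξ₂) = b(ξ₂)c₀(ξ₁) − β₁(ξ₂)b′(ξ₂)c₁(ξ₁) + α₁(ξ₂)B(ξ₂)d(ξ₁) and f⁽²⁾(ξ₁,ξ₂) = b(ξ₁)c₀(ξ₂) − β₂(ξ₁)b′(ξ₁)c₁(ξ₂) − α₂(ξ₁)B(ξ₁)d(ξ₂). Then f⁽¹⁾(0,ξ) = f⁽²⁾(ξ,0) for all ξ ∈ [0,1], so there is a unique function φ on F⁽¹⁾([0,1]²) ∪ F⁽²⁾([0,1]²) with φ ∘ F⁽ⁱ⁾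 = f⁽ⁱ⁾ for i = 1, 2, and this φ is continuously differentiable on Ω. -/

import Mathlib

/-!
Away from the interface, `φ` is locally `f⁽ⁱ⁾ ∘ g`, where `g` is a `C¹` local inverse of `F⁽ⁱ⁾`
(inverse function theorem; injectivity and compactness of the square force `g` to land back in
the square). Near an interface point `φ` is glued from two such functions along the closed images
of the patches, and the glued function is `C¹` once the two differentials agree on the interface.
Composed with `dF⁽ⁱ⁾` these differentials become `df⁽ⁱ⁾`; they agree on the common tangent
`∂₂F⁽¹⁾(0,ξ) = ∂₁F⁽²⁾(ξ,0)` because both traces are `b`, and on `∂₁F⁽¹⁾` because the edge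
functions satisfy the same relation `α₁ ∂₂f⁽²⁾ + α₂ ∂₁f⁽¹⁾ + β ∂₂f⁽¹⁾ = 0` as the geometry and
`α₂ ≠ 0`. Since `∂₁F⁽¹⁾, ∂₂F⁽¹⁾` is a basis, the differentials coincide.
-/

/-- The determinant of the 2×2 matrix with columns `a` and `b`. -/
def det2 (a b : ℝ × ℝ) : ℝ := a.1 * b.2 - a.2 * b.1

/-- Partial derivative with respect to the first argument. -/
noncomputable def pd1 {E : Type*} [NormedAddCommGroup E] [NormedSpace ℝ E]
    (f : ℝ × ℝ → E) (x : ℝ × ℝ) : E := deriv (fun s => f (s, x.2)) x.1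

/-- Partial derivative with respect to the second argument. -/
noncomputable def pd2 {E : Type*} [NormedAddCommGroup E] [NormedSpace ℝ E]
    (f : ℝ × ℝ → E) (x : ℝ × ℝ) : E := deriv (fun s => f (x.1, s)) x.2

/-- The unit square `[0,1]²` in `ℝ²`. -/
def square : Set (ℝ × ℝ) := Set.Icc (0:ℝ) 1 ×ˢ Set.Icc (0:ℝ) 1

open Set Filter Topology Function

lemma exists_smul_add_smul_eq_of_det2_ne_zero {a b : ℝ × ℝ} (h : det2 a b ≠ 0) (w : ℝ × ℝ) :
    ∃ s t : ℝ, s • a + t • b = w := by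
  refine ⟨(w.1 * b.2 - w.2 * b.1) / det2 a b, (a.1 * w.2 - a.2 * w.1) / det2 a b, ?_⟩
  unfold det2 at h ⊢
  ext <;> simp only [Prod.fst_add, Prod.snd_add, Prod.smul_fst, Prod.smul_snd, smul_eq_mul] <;>
    rw [div_mul_eq_mul_div, div_mul_eq_mul_div, ← add_div, div_eq_iff h] <;> ring

section LinearAlgebra

variable {E : Type*} [AddCommGroup E] [Module ℝ E] [TopologicalSpace E]

lemma ContinuousLinearMap.ext_of_det2_ne_zero {L₁ L₂ : ℝ × ℝ →L[ℝ] E} {a b : ℝ × ℝ}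
    (h : det2 a b ≠ 0) (ha : L₁ a = L₂ a) (hb : L₁ b = L₂ b) : L₁ = L₂ := by
  refine ContinuousLinearMap.ext fun w => ?_
  obtain ⟨s, t, rfl⟩ := exists_smul_add_smul_eq_of_det2_ne_zero h w
  simp only [map_add, map_smul, ha, hb]

lemma ContinuousLinearMap.eq_of_gluing {L₁ L₂ : ℝ × ℝ →L[ℝ] E} {u₁ u₂ v : ℝ × ℝ}
    {a₁ a₂ c : ℝ} (hdet : det2 u₁ v ≠ 0) (ha₂ : a₂ ≠ 0)
    (hglue : a₁ • u₂ + a₂ • u₁ + c • v = 0) (hv : L₁ v = L₂ v)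
    (hL : a₁ • L₂ u₂ + a₂ • L₁ u₁ + c • L₁ v = 0) : L₁ = L₂ := by
  have h₂ : a₁ • L₂ u₂ + a₂ • L₂ u₁ + c • L₂ v = 0 := by
    simpa only [map_add, map_smul, map_zero] using congrArg L₂ hglue
  have hu : a₂ • (L₁ u₁ - L₂ u₁) = 0 := by
    rw [smul_sub]
    linear_combination (norm := module) hL - h₂ - c • hv
  exact ext_of_det2_ne_zero hdet (sub_eq_zero.1 ((smul_eq_zero.1 hu).resolve_left ha₂)) hv

end LinearAlgebra

lemma ContinuousLinearMap.isInvertible_of_det2_ne_zero {M : ℝ × ℝ →L[ℝ] ℝ × ℝ}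
    (h : det2 (M (1, 0)) (M (0, 1)) ≠ 0) : M.IsInvertible := by
  have hsurj : Surjective M := fun w => by
    obtain ⟨s, t, rfl⟩ := exists_smul_add_smul_eq_of_det2_ne_zero h w
    refine ⟨(s, t), ?_⟩
    rw [← map_smul, ← map_smul, ← map_add]
    simp
  have hinj : Injective M := LinearMap.injective_iff_surjective.2 hsurj
  exact ⟨(LinearEquiv.ofBijective M.toLinearMap ⟨hinj, hsurj⟩).toContinuousLinearEquiv, rfl⟩

section PartialDerivatives

variable {E : Type*} [NormedAddCommGroup E] [NormedSpace ℝ E] {f : ℝ × ℝ → E} {x : ℝ × ℝ}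

lemma HasFDerivAt.pd1_eq {L : ℝ × ℝ →L[ℝ] E} (h : HasFDerivAt f L x) : pd1 f x = L (1, 0) :=
  (h.comp_hasDerivAt_of_eq x.1 ((hasDerivAt_id x.1).prodMk (hasDerivAt_const x.1 x.2)) rfl).deriv

lemma HasFDerivAt.pd2_eq {L : ℝ × ℝ →L[ℝ] E} (h : HasFDerivAt f L x) : pd2 f x = L (0, 1) :=
  (h.comp_hasDerivAt_of_eq x.2 ((hasDerivAt_const x.2 x.1).prodMk (hasDerivAt_id x.2)) rfl).deriv

lemma ContinuousLinearMap.apply_pd_eq_of_comp_fderiv_eq {F : ℝ × ℝ → ℝ × ℝ}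
    {L : ℝ × ℝ →L[ℝ] E} (hF : DifferentiableAt ℝ F x) (hf : DifferentiableAt ℝ f x)
    (hL : L.comp (fderiv ℝ F x) = fderiv ℝ f x) :
    L (pd1 F x) = pd1 f x ∧ L (pd2 F x) = pd2 f x := by
  rw [hF.hasFDerivAt.pd1_eq, hF.hasFDerivAt.pd2_eq, hf.hasFDerivAt.pd1_eq,
    hf.hasFDerivAt.pd2_eq, ← hL]
  exact ⟨rfl, rfl⟩

end PartialDerivatives

section Calculus

variable {E G : Type*} [NormedAddCommGroup E] [NormedSpace ℝ E]
  [NormedAddCommGroup G] [NormedSpace ℝ G]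

lemma fderiv_comp_comp_eq_of_rightInvOn {f : E → G} {g F : E → E} {W : Set E} {z : E}
    {M : E →L[ℝ] E} (hW : W ∈ 𝓝 z) (hFg : ∀ w ∈ W, F (g w) = w)
    (hg : DifferentiableAt ℝ g z) (hF : HasFDerivAt F M (g z)) (hM : Injective M)
    (hf : DifferentiableAt ℝ f (g z)) :
    (fderiv ℝ (f ∘ g) z).comp M = fderiv ℝ f (g z) := by
  have hMg : M.comp (fderiv ℝ g z) = ContinuousLinearMap.id ℝ E :=
    (hF.comp z hg.hasFDerivAt).unique
      ((hasFDerivAt_id z).congr_of_eventuallyEq (eventually_of_mem hW hFg))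
  have hgM : ∀ v, fderiv ℝ g z (M v) = v := fun v =>
    hM (by simpa using congr($hMg (M v)))
  ext v
  simp [fderiv_comp z hf hg, hgM]

lemma hasFDerivWithinAt_and_continuousWithinAt_of_eqOn_inter {A W : Set E} {φ h : E → G}
    {L : E → E →L[ℝ] G} (hA : IsClosed A) (hW : IsOpen W) (hh : ContDiffOn ℝ 1 h W)
    (hφ : EqOn φ h (W ∩ A)) (hL : EqOn L (fderiv ℝ h) (W ∩ A)) {z : E} (hz : z ∈ W) :
    HasFDerivWithinAt φ (L z) (W ∩ A) z ∧ ContinuousWithinAt L (W ∩ A) z := by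
  by_cases hzA : z ∈ A
  · have hzWA : z ∈ W ∩ A := ⟨hz, hzA⟩
    rw [hL hzWA]
    exact ⟨((hh.contDiffAt (hW.mem_nhds hz)).differentiableAt one_ne_zero).hasFDerivAt
        |>.hasFDerivWithinAt.congr hφ (hφ hzWA),
      ((hh.continuousOn_fderiv_of_isOpen hW le_rfl).continuousAt (hW.mem_nhds hz))
        |>.continuousWithinAt.congr hL (hL hzWA)⟩
  · have hz' : z ∉ closure (W ∩ A) :=
      fun hcl => hzA (hA.closure_subset (closure_mono inter_subset_right hcl))
    exact ⟨.of_notMem_closure hz', continuousWithinAt_of_notMem_closure hz'⟩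

theorem contDiffOn_of_eqOn_of_isClosed {A B W : Set E} {φ h k : E → G} (hA : IsClosed A)
    (hB : IsClosed B) (hW : IsOpen W) (hWAB : W ⊆ A ∪ B) (hh : ContDiffOn ℝ 1 h W)
    (hk : ContDiffOn ℝ 1 k W) (hφh : EqOn φ h (W ∩ A)) (hφk : EqOn φ k (W ∩ B))
    (hhk : ∀ z ∈ W ∩ (A ∩ B), fderiv ℝ h z = fderiv ℝ k z) : ContDiffOn ℝ 1 φ W := by
  classical
  set L : E → E →L[ℝ] G := A.piecewise (fderiv ℝ h) (fderiv ℝ k)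
  have hLh : EqOn L (fderiv ℝ h) (W ∩ A) := fun z hz => piecewise_eq_of_mem _ _ _ hz.2
  have hLk : EqOn L (fderiv ℝ k) (W ∩ B) := fun z hz => by
    by_cases hzA : z ∈ A
    · rw [hLh ⟨hz.1, hzA⟩, hhk z ⟨hz.1, hzA, hz.2⟩]
    · exact piecewise_eq_of_notMem _ _ _ hzA
  have hcover : W ∩ A ∪ W ∩ B = W := by rw [← inter_union_distrib_left, inter_eq_left.2 hWAB]
  have hpieces : ∀ z ∈ W, HasFDerivWithinAt φ (L z) W z ∧ ContinuousWithinAt L W z := by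
    intro z hz
    obtain ⟨hdA, hcA⟩ :=
      hasFDerivWithinAt_and_continuousWithinAt_of_eqOn_inter hA hW hh hφh hLh hz
    obtain ⟨hdB, hcB⟩ :=
      hasFDerivWithinAt_and_continuousWithinAt_of_eqOn_inter hB hW hk hφk hLk hz
    rw [← hcover]
    exact ⟨hdA.union hdB, hcA.union hcB⟩
  have hderiv : ∀ z ∈ W, HasFDerivAt φ (L z) z := fun z hz =>
    (hpieces z hz).1.hasFDerivAt (hW.mem_nhds hz)
  rw [show (1 : WithTop ℕ∞) = 0 + 1 from rfl, contDiffOn_succ_iff_fderiv_of_isOpen hW,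
    contDiffOn_zero]
  exact ⟨fun z hz => (hderiv z hz).differentiableAt.differentiableWithinAt, by simp,
    fun z hz => (hpieces z hz).2.congr (fun w hw => (hderiv w hw).fderiv) (hderiv z hz).fderiv⟩

end Calculus

section RegularPatch

variable {E G : Type*} [NormedAddCommGroup E] [NormedSpace ℝ E]
  [NormedAddCommGroup G] [NormedSpace ℝ G]

structure IsRegularPatch (F : E → E) (K : Set E) : Prop where
  isCompact : IsCompact K
  injOn : InjOn F K
  contDiffAt : ∀ x ∈ K, ContDiffAt ℝ 1 F x
  isInvertible : ∀ x ∈ K, (fderiv ℝ F x).IsInvertible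

namespace IsRegularPatch

variable {F : E → E} {K : Set E}

lemma continuousOn (hP : IsRegularPatch F K) : ContinuousOn F K :=
  fun x hx => (hP.contDiffAt x hx).continuousAt.continuousWithinAt

lemma isClosed_image (hP : IsRegularPatch F K) : IsClosed (F '' K) :=
  (hP.isCompact.image_of_continuousOn hP.continuousOn).isClosed

lemma exists_rightInvOn [CompleteSpace E] (hP : IsRegularPatch F K) {x : E} (hx : x ∈ K) :
    ∃ (W : Set E) (g : E → E), IsOpen W ∧ F x ∈ W ∧ ContDiffOn ℝ 1 g W ∧
      (∀ z ∈ W, F (g z) = z) ∧ MapsTo g (W ∩ F '' K) K := by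
  obtain ⟨A, hA⟩ := hP.isInvertible x hx
  have hFx := hP.contDiffAt x hx
  have hAF : HasFDerivAt F (A : E →L[ℝ] E) x :=
    hA ▸ (hFx.differentiableAt one_ne_zero).hasFDerivAt
  have hstrict := hFx.hasStrictFDerivAt' hAF one_ne_zero
  set g := hFx.localInverse hAF one_ne_zero
  obtain ⟨V, hV, hgV⟩ := (hFx.to_localInverse hAF one_ne_zero).contDiffOn le_rfl (by simp)
  obtain ⟨W₀, hW₀sub, hW₀, hxW₀⟩ :=
    mem_nhds_iff.1 (inter_mem hV hstrict.eventually_right_inverse)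
  obtain ⟨O, hOsub, hO, hxO⟩ := mem_nhds_iff.1 hstrict.eventually_left_inverse
  -- `g` is a left inverse only on `O`, so cut away the image of the rest of `K`.
  have hfar : IsClosed (F '' (K \ O)) :=
    ((hP.isCompact.diff hO).image_of_continuousOn (hP.continuousOn.mono sdiff_subset)).isClosed
  have hFx_notMem : F x ∉ F '' (K \ O) :=
    fun ⟨w, hw, hwx⟩ => hw.2 (hP.injOn hw.1 hx hwx ▸ hxO)
  refine ⟨W₀ ∩ (F '' (K \ O))ᶜ, g, hW₀.inter hfar.isOpen_compl, ⟨hxW₀, hFx_notMem⟩,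
    hgV.mono fun z hz => (hW₀sub hz.1).1, fun z hz => (hW₀sub hz.1).2, ?_⟩
  rintro _ ⟨hz, w, hwK, rfl⟩
  have hwO : w ∈ O := by_contra fun hwO => hz.2 ⟨w, ⟨hwK, hwO⟩, rfl⟩
  rw [show g (F w) = w from hOsub hwO]
  exact hwK

variable {f φ : E → G}

lemma exists_contDiffOn_eqOn_image [CompleteSpace E] (hP : IsRegularPatch F K)
    (hf : ContDiff ℝ 1 f) (hφ : ∀ x ∈ K, φ (F x) = f x) {y : E} (hy : y ∈ F '' K) :
    ∃ (W : Set E) (h : E → G), IsOpen W ∧ y ∈ W ∧ ContDiffOn ℝ 1 h W ∧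
      EqOn φ h (W ∩ F '' K) ∧
      ∀ x ∈ K, F x ∈ W → (fderiv ℝ h (F x)).comp (fderiv ℝ F x) = fderiv ℝ f x := by
  obtain ⟨x, hx, rfl⟩ := hy
  obtain ⟨W, g, hW, hxW, hg, hFg, hgK⟩ := hP.exists_rightInvOn hx
  refine ⟨W, f ∘ g, hW, hxW, hf.comp_contDiffOn hg, fun z hz => ?_, fun x' hx' hx'W => ?_⟩
  · rw [comp_apply, ← hφ _ (hgK hz), hFg z hz.1]
  · have hgx' : g (F x') = x' := hP.injOn (hgK ⟨hx'W, x', hx', rfl⟩) hx' (hFg _ hx'W)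
    obtain ⟨A, hA⟩ := hP.isInvertible x' hx'
    have key := fderiv_comp_comp_eq_of_rightInvOn (M := fderiv ℝ F x') (hW.mem_nhds hx'W) hFg
      ((hg.contDiffAt (hW.mem_nhds hx'W)).differentiableAt one_ne_zero)
      (by rw [hgx']; exact ((hP.contDiffAt x' hx').differentiableAt one_ne_zero).hasFDerivAt)
      (hA ▸ A.injective) (hf.differentiable one_ne_zero _)
    rwa [hgx'] at key

lemma contDiffAt_of_eventually_mem [CompleteSpace E] (hP : IsRegularPatch F K)
    (hf : ContDiff ℝ 1 f) (hφ : ∀ x ∈ K, φ (F x) = f x) {y : E}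
    (hy : ∀ᶠ z in 𝓝 y, z ∈ F '' K) : ContDiffAt ℝ 1 φ y := by
  obtain ⟨W, h, hW, hyW, hh, hφh, -⟩ := hP.exists_contDiffOn_eqOn_image hf hφ hy.self_of_nhds
  refine (hh.contDiffAt (hW.mem_nhds hyW)).congr_of_eventuallyEq ?_
  filter_upwards [hW.mem_nhds hyW, hy] with z hzW hzK using hφh ⟨hzW, hzK⟩

end IsRegularPatch

theorem contDiffOn_of_comp_eq_of_isRegularPatch [CompleteSpace E] {F₁ F₂ : E → E}
    {K₁ K₂ Ω : Set E} {f₁ f₂ φ : E → G} (hP₁ : IsRegularPatch F₁ K₁)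
    (hP₂ : IsRegularPatch F₂ K₂) (hf₁ : ContDiff ℝ 1 f₁) (hf₂ : ContDiff ℝ 1 f₂)
    (hφ₁ : ∀ x ∈ K₁, φ (F₁ x) = f₁ x) (hφ₂ : ∀ x ∈ K₂, φ (F₂ x) = f₂ x) (hΩ : IsOpen Ω)
    (hΩK : Ω ⊆ F₁ '' K₁ ∪ F₂ '' K₂)
    (hmatch : ∀ x₁ ∈ K₁, ∀ x₂ ∈ K₂, F₁ x₁ = F₂ x₂ → ∀ L₁ L₂ : E →L[ℝ] G,
      L₁.comp (fderiv ℝ F₁ x₁) = fderiv ℝ f₁ x₁ →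
      L₂.comp (fderiv ℝ F₂ x₂) = fderiv ℝ f₂ x₂ → L₁ = L₂) :
    ContDiffOn ℝ 1 φ Ω := by
  intro y hy
  refine ContDiffAt.contDiffWithinAt ?_
  have hS₁ := hP₁.isClosed_image
  have hS₂ := hP₂.isClosed_image
  by_cases hy₁ : y ∈ F₁ '' K₁ <;> by_cases hy₂ : y ∈ F₂ '' K₂
  · obtain ⟨W₁, h₁, hW₁, hyW₁, hh₁, hφh₁, hDh₁⟩ :=
      hP₁.exists_contDiffOn_eqOn_image hf₁ hφ₁ hy₁
    obtain ⟨W₂, h₂, hW₂, hyW₂, hh₂, hφh₂, hDh₂⟩ :=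
      hP₂.exists_contDiffOn_eqOn_image hf₂ hφ₂ hy₂
    have hW : IsOpen (W₁ ∩ W₂ ∩ Ω) := (hW₁.inter hW₂).inter hΩ
    refine (contDiffOn_of_eqOn_of_isClosed hS₁ hS₂ hW (fun z hz => hΩK hz.2)
      (hh₁.mono fun z hz => hz.1.1) (hh₂.mono fun z hz => hz.1.2)
      (hφh₁.mono (inter_subset_inter_left _ fun z hz => hz.1.1))
      (hφh₂.mono (inter_subset_inter_left _ fun z hz => hz.1.2)) ?_
      ).contDiffAt (hW.mem_nhds ⟨⟨hyW₁, hyW₂⟩, hy⟩)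
    rintro _ ⟨hz, ⟨x₁, hx₁, rfl⟩, x₂, hx₂, hx₂₁⟩
    have hD₂ := hDh₂ x₂ hx₂ (hx₂₁ ▸ hz.1.2)
    rw [hx₂₁] at hD₂
    exact hmatch x₁ hx₁ x₂ hx₂ hx₂₁.symm _ _ (hDh₁ x₁ hx₁ hz.1.1) hD₂
  · refine hP₁.contDiffAt_of_eventually_mem hf₁ hφ₁ ?_
    filter_upwards [hΩ.mem_nhds hy, hS₂.isOpen_compl.mem_nhds hy₂] with z hzΩ hz₂
      using (hΩK hzΩ).resolve_right hz₂
  · refine hP₂.contDiffAt_of_eventually_mem hf₂ hφ₂ ?_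
    filter_upwards [hΩ.mem_nhds hy, hS₁.isOpen_compl.mem_nhds hy₁] with z hzΩ hz₁
      using (hΩK hzΩ).resolve_left hz₁
  · exact absurd (hΩK hy) (by simp [hy₁, hy₂])

end RegularPatch

lemma IsRegularPatch.of_det2_ne_zero {F : ℝ × ℝ → ℝ × ℝ} {U K : Set (ℝ × ℝ)} (hU : IsOpen U)
    (hK : IsCompact K) (hKU : K ⊆ U) (hF : ContDiffOn ℝ 1 F U) (hinj : InjOn F K)
    (hdet : ∀ x ∈ K, det2 (pd1 F x) (pd2 F x) ≠ 0) : IsRegularPatch F K := by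
  have hFK : ∀ x ∈ K, ContDiffAt ℝ 1 F x := fun x hx => hF.contDiffAt (hU.mem_nhds (hKU hx))
  refine ⟨hK, hinj, hFK, fun x hx => ?_⟩
  have hFx := ((hFK x hx).differentiableAt one_ne_zero).hasFDerivAt
  apply ContinuousLinearMap.isInvertible_of_det2_ne_zero
  rw [← hFx.pd1_eq, ← hFx.pd2_eq]
  exact hdet x hx

theorem eq_of_comp_fderiv_eq_of_gluing {E : Type*} [NormedAddCommGroup E] [NormedSpace ℝ E]
    {F₁ F₂ : ℝ × ℝ → ℝ × ℝ} {f₁ f₂ : ℝ × ℝ → E} {x₁ x₂ : ℝ × ℝ} {a₁ a₂ c : ℝ}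
    {L₁ L₂ : ℝ × ℝ →L[ℝ] E} (hF₁ : DifferentiableAt ℝ F₁ x₁) (hF₂ : DifferentiableAt ℝ F₂ x₂)
    (hf₁ : DifferentiableAt ℝ f₁ x₁) (hf₂ : DifferentiableAt ℝ f₂ x₂)
    (hdet : det2 (pd1 F₁ x₁) (pd2 F₁ x₁) ≠ 0) (ha₂ : a₂ ≠ 0)
    (htanF : pd2 F₁ x₁ = pd1 F₂ x₂)
    (hglueF : a₁ • pd2 F₂ x₂ + a₂ • pd1 F₁ x₁ + c • pd2 F₁ x₁ = 0)
    (htanf : pd2 f₁ x₁ = pd1 f₂ x₂)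
    (hgluef : a₁ • pd2 f₂ x₂ + a₂ • pd1 f₁ x₁ + c • pd2 f₁ x₁ = 0)
    (hL₁ : L₁.comp (fderiv ℝ F₁ x₁) = fderiv ℝ f₁ x₁)
    (hL₂ : L₂.comp (fderiv ℝ F₂ x₂) = fderiv ℝ f₂ x₂) : L₁ = L₂ := by
  obtain ⟨h₁₁, h₁₂⟩ := L₁.apply_pd_eq_of_comp_fderiv_eq hF₁ hf₁ hL₁
  obtain ⟨h₂₁, h₂₂⟩ := L₂.apply_pd_eq_of_comp_fderiv_eq hF₂ hf₂ hL₂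
  refine ContinuousLinearMap.eq_of_gluing hdet ha₂ hglueF ?_ ?_
  · rw [h₁₂, htanF, h₂₁, htanf]
  · rwa [h₂₂, h₁₁, h₁₂]

lemma deriv_eq_of_eqOn_Icc {E : Type*} [NormedAddCommGroup E] [NormedSpace ℝ E] {f g : ℝ → E}
    {a b x : ℝ} (hab : a < b) (hfg : EqOn f g (Icc a b)) (hx : x ∈ Icc a b)
    (hf : DifferentiableAt ℝ f x) (hg : DifferentiableAt ℝ g x) : deriv f x = deriv g x :=
  (uniqueDiffOn_Icc hab x hx).eq_deriv _ hf.hasDerivAt.hasDerivWithinAt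
    (hg.hasDerivAt.hasDerivWithinAt.congr hfg (hfg hx))

lemma exists_comp_eq_of_injOn {α β γ : Type*} [Nonempty α] {F₁ F₂ : α → β} {f₁ f₂ : α → γ}
    {K₁ K₂ : Set α} (h₁ : InjOn F₁ K₁) (h₂ : InjOn F₂ K₂)
    (hcompat : ∀ x₁ ∈ K₁, ∀ x₂ ∈ K₂, F₁ x₁ = F₂ x₂ → f₁ x₁ = f₂ x₂) :
    ∃ φ : β → γ, (∀ x ∈ K₁, φ (F₁ x) = f₁ x) ∧ ∀ x ∈ K₂, φ (F₂ x) = f₂ x := by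
  classical
  refine ⟨fun y => if y ∈ F₁ '' K₁ then f₁ (invFunOn F₁ K₁ y) else f₂ (invFunOn F₂ K₂ y),
    fun x hx => ?_, fun x hx => ?_⟩
  · dsimp only
    rw [if_pos (mem_image_of_mem F₁ hx), h₁.leftInvOn_invFunOn hx]
  · dsimp only
    split_ifs with hx₁
    · obtain ⟨x₁, hx₁, hx₁₂⟩ := hx₁
      rw [← hx₁₂, h₁.leftInvOn_invFunOn hx₁]
      exact hcompat x₁ hx₁ x hx hx₁₂
    · rw [h₂.leftInvOn_invFunOn hx]

section Square

variable {F₁ F₂ : ℝ × ℝ → ℝ × ℝ}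

lemma left_mem_square {ξ : ℝ} (hξ : ξ ∈ Icc (0 : ℝ) 1) : ((0 : ℝ), ξ) ∈ square :=
  ⟨left_mem_Icc.2 zero_le_one, hξ⟩

lemma bottom_mem_square {ξ : ℝ} (hξ : ξ ∈ Icc (0 : ℝ) 1) : (ξ, (0 : ℝ)) ∈ square :=
  ⟨hξ, left_mem_Icc.2 zero_le_one⟩

lemma exists_eq_edge_of_apply_eq (hinj₁ : InjOn F₁ square) (hinj₂ : InjOn F₂ square)
    (hcompat : ∀ ξ ∈ Icc (0 : ℝ) 1, F₁ (0, ξ) = F₂ (ξ, 0))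
    (hinter : F₁ '' square ∩ F₂ '' square = F₁ '' (({0} : Set ℝ) ×ˢ Icc (0 : ℝ) 1))
    ⦃x₁ x₂ : ℝ × ℝ⦄ (hx₁ : x₁ ∈ square) (hx₂ : x₂ ∈ square) (h : F₁ x₁ = F₂ x₂) :
    ∃ ξ ∈ Icc (0 : ℝ) 1, x₁ = (0, ξ) ∧ x₂ = (ξ, 0) := by
  obtain ⟨⟨s, ξ⟩, ⟨rfl, hξ⟩, hsξ⟩ : F₁ x₁ ∈ F₁ '' (({0} : Set ℝ) ×ˢ Icc (0 : ℝ) 1) :=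
    hinter ▸ ⟨mem_image_of_mem F₁ hx₁, h ▸ mem_image_of_mem F₂ hx₂⟩
  refine ⟨ξ, hξ, (hinj₁ (left_mem_square hξ) hx₁ hsξ).symm, hinj₂ hx₂ (bottom_mem_square hξ) ?_⟩
  rw [← h, ← hsξ, hcompat ξ hξ]

lemma exists_comp_eq_of_edge {γ : Type*} (hinj₁ : InjOn F₁ square) (hinj₂ : InjOn F₂ square)
    (hcompat : ∀ ξ ∈ Icc (0 : ℝ) 1, F₁ (0, ξ) = F₂ (ξ, 0))
    (hinter : F₁ '' square ∩ F₂ '' square = F₁ '' (({0} : Set ℝ) ×ˢ Icc (0 : ℝ) 1))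
    {f₁ f₂ : ℝ × ℝ → γ} (htrace : ∀ ξ ∈ Icc (0 : ℝ) 1, f₁ (0, ξ) = f₂ (ξ, 0)) :
    ∃ φ : ℝ × ℝ → γ, ∀ x ∈ square, φ (F₁ x) = f₁ x ∧ φ (F₂ x) = f₂ x := by
  obtain ⟨φ, h₁, h₂⟩ := exists_comp_eq_of_injOn hinj₁ hinj₂ fun x₁ hx₁ x₂ hx₂ h => by
    obtain ⟨ξ, hξ, rfl, rfl⟩ := exists_eq_edge_of_apply_eq hinj₁ hinj₂ hcompat hinter hx₁ hx₂ h
    exact htrace ξ hξ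
  exact ⟨φ, fun x hx => ⟨h₁ x hx, h₂ x hx⟩⟩

lemma pd2_eq_pd1_of_edge (hcompat : ∀ ξ ∈ Icc (0 : ℝ) 1, F₁ (0, ξ) = F₂ (ξ, 0)) {ξ : ℝ}
    (hξ : ξ ∈ Icc (0 : ℝ) 1) (hF₁ : DifferentiableAt ℝ F₁ (0, ξ))
    (hF₂ : DifferentiableAt ℝ F₂ (ξ, 0)) : pd2 F₁ (0, ξ) = pd1 F₂ (ξ, 0) :=
  deriv_eq_of_eqOn_Icc zero_lt_one hcompat hξ (by fun_prop) (by fun_prop)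

theorem contDiffOn_interior_of_gluing {E : Type*} [NormedAddCommGroup E] [NormedSpace ℝ E]
    {U₁ U₂ : Set (ℝ × ℝ)} {f₁ f₂ φ : ℝ × ℝ → E} {a₁ a₂ c : ℝ → ℝ} (hU₁ : IsOpen U₁)
    (hU₂ : IsOpen U₂) (hsqU₁ : square ⊆ U₁) (hsqU₂ : square ⊆ U₂) (hF₁ : ContDiffOn ℝ 1 F₁ U₁)
    (hF₂ : ContDiffOn ℝ 1 F₂ U₂) (hinj₁ : InjOn F₁ square) (hinj₂ : InjOn F₂ square)
    (hdet₁ : ∀ x ∈ square, det2 (pd1 F₁ x) (pd2 F₁ x) ≠ 0)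
    (hdet₂ : ∀ x ∈ square, det2 (pd1 F₂ x) (pd2 F₂ x) ≠ 0)
    (hcompat : ∀ ξ ∈ Icc (0 : ℝ) 1, F₁ (0, ξ) = F₂ (ξ, 0))
    (hinter : F₁ '' square ∩ F₂ '' square = F₁ '' (({0} : Set ℝ) ×ˢ Icc (0 : ℝ) 1))
    (ha₂ : ∀ ξ ∈ Icc (0 : ℝ) 1, a₂ ξ ≠ 0)
    (hglueF : ∀ ξ ∈ Icc (0 : ℝ) 1,
      a₁ ξ • pd2 F₂ (ξ, 0) + a₂ ξ • pd1 F₁ (0, ξ) + c ξ • pd2 F₁ (0, ξ) = 0)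
    (hf₁ : ContDiff ℝ 1 f₁) (hf₂ : ContDiff ℝ 1 f₂)
    (htanf : ∀ ξ ∈ Icc (0 : ℝ) 1, pd2 f₁ (0, ξ) = pd1 f₂ (ξ, 0))
    (hgluef : ∀ ξ ∈ Icc (0 : ℝ) 1,
      a₁ ξ • pd2 f₂ (ξ, 0) + a₂ ξ • pd1 f₁ (0, ξ) + c ξ • pd2 f₁ (0, ξ) = 0)
    (hφ : ∀ x ∈ square, φ (F₁ x) = f₁ x ∧ φ (F₂ x) = f₂ x) :
    ContDiffOn ℝ 1 φ (interior (F₁ '' square ∪ F₂ '' square)) := by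
  have hsq : IsCompact square := isCompact_Icc.prod isCompact_Icc
  have hP₁ := IsRegularPatch.of_det2_ne_zero hU₁ hsq hsqU₁ hF₁ hinj₁ hdet₁
  have hP₂ := IsRegularPatch.of_det2_ne_zero hU₂ hsq hsqU₂ hF₂ hinj₂ hdet₂
  refine contDiffOn_of_comp_eq_of_isRegularPatch hP₁ hP₂ hf₁ hf₂ (fun x hx => (hφ x hx).1)
    (fun x hx => (hφ x hx).2) isOpen_interior interior_subset ?_
  intro x₁ hx₁ x₂ hx₂ h L₁ L₂ hL₁ hL₂
  obtain ⟨ξ, hξ, rfl, rfl⟩ := exists_eq_edge_of_apply_eq hinj₁ hinj₂ hcompat hinter hx₁ hx₂ h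
  have hF₁ξ := (hP₁.contDiffAt _ hx₁).differentiableAt one_ne_zero
  have hF₂ξ := (hP₂.contDiffAt _ hx₂).differentiableAt one_ne_zero
  exact eq_of_comp_fderiv_eq_of_gluing hF₁ξ hF₂ξ (hf₁.differentiable one_ne_zero _)
    (hf₂.differentiable one_ne_zero _) (hdet₁ _ hx₁) (ha₂ ξ hξ)
    (pd2_eq_pd1_of_edge hcompat hξ hF₁ξ hF₂ξ) (hglueF ξ hξ) (htanf ξ hξ) (hgluef ξ hξ) hL₁ hL₂

end Square

/-- The pullback `f⁽¹⁾` of an element of `𝒜_Σ` to a patch with interface `{ξ₁ = 0}`; the other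
pullback `f⁽²⁾` is `edgeFun c₀ c₁ d b B β₂ (-α₂) ∘ Prod.swap`. -/
noncomputable def edgeFun (c₀ c₁ d b B β α : ℝ → ℝ) (x : ℝ × ℝ) : ℝ :=
  b x.2 * c₀ x.1 - β x.2 * deriv b x.2 * c₁ x.1 + α x.2 * B x.2 * d x.1

section EdgeFun

variable {c₀ c₁ d : ℝ → ℝ} (b B β α : ℝ → ℝ)

lemma edgeFun_zero_left (hc₀ : c₀ 0 = 1) (hc₁ : c₁ 0 = 0) (hd : d 0 = 0) (t : ℝ) :
    edgeFun c₀ c₁ d b B β α (0, t) = b t := by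
  simp [edgeFun, hc₀, hc₁, hd]

lemma pd2_edgeFun_zero_left (hc₀ : c₀ 0 = 1) (hc₁ : c₁ 0 = 0) (hd : d 0 = 0) (t : ℝ) :
    pd2 (edgeFun c₀ c₁ d b B β α) (0, t) = deriv b t := by
  simp only [pd2, edgeFun_zero_left b B β α hc₀ hc₁ hd]

lemma pd1_edgeFun_zero_left (hc₀ : DifferentiableAt ℝ c₀ 0) (hc₁ : DifferentiableAt ℝ c₁ 0)
    (hd : DifferentiableAt ℝ d 0) (hc₀' : deriv c₀ 0 = 0) (hc₁' : deriv c₁ 0 = 1) (t : ℝ) :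
    pd1 (edgeFun c₀ c₁ d b B β α) (0, t) = -(β t * deriv b t) + α t * B t * deriv d 0 := by
  have h := (((hc₀.hasDerivAt.const_mul (b t)).sub
    (hc₁.hasDerivAt.const_mul (β t * deriv b t))).add (hd.hasDerivAt.const_mul (α t * B t))).deriv
  calc pd1 (edgeFun c₀ c₁ d b B β α) (0, t)
      = b t * deriv c₀ 0 - β t * deriv b t * deriv c₁ 0 + α t * B t * deriv d 0 := h
    _ = -(β t * deriv b t) + α t * B t * deriv d 0 := by rw [hc₀', hc₁']; ring

lemma contDiff_edgeFun (hc₀ : ContDiff ℝ 1 c₀) (hc₁ : ContDiff ℝ 1 c₁) (hd : ContDiff ℝ 1 d)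
    (hb : ContDiff ℝ 2 b) (hB : ContDiff ℝ 1 B) (hβ : ContDiff ℝ 1 β) (hα : ContDiff ℝ 1 α) :
    ContDiff ℝ 1 (edgeFun c₀ c₁ d b B β α) := by
  have hb₁ : ContDiff ℝ 1 b := hb.of_le one_le_two
  have hb' : ContDiff ℝ 1 (deriv b) := hb.deriv'
  unfold edgeFun
  fun_prop

lemma edgeFun_gluing (α₁ α₂ β₁ β₂ : ℝ → ℝ) (hc₀ : DifferentiableAt ℝ c₀ 0)
    (hc₁ : DifferentiableAt ℝ c₁ 0) (hd : DifferentiableAt ℝ d 0) (hc₀0 : c₀ 0 = 1)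
    (hc₀' : deriv c₀ 0 = 0) (hc₁0 : c₁ 0 = 0) (hc₁' : deriv c₁ 0 = 1) (hd0 : d 0 = 0) (t : ℝ) :
    α₁ t * pd1 (edgeFun c₀ c₁ d b B β₂ (-α₂)) (0, t)
      + α₂ t * pd1 (edgeFun c₀ c₁ d b B β₁ α₁) (0, t)
      + (α₁ t * β₂ t + α₂ t * β₁ t) * pd2 (edgeFun c₀ c₁ d b B β₁ α₁) (0, t) = 0 := by
  rw [pd1_edgeFun_zero_left _ _ _ _ hc₀ hc₁ hd hc₀' hc₁',
    pd1_edgeFun_zero_left _ _ _ _ hc₀ hc₁ hd hc₀' hc₁',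
    pd2_edgeFun_zero_left _ _ _ _ hc₀0 hc₁0 hd0, Pi.neg_apply]
  ring

end EdgeFun

theorem stmt9_general
    (F1 F2 : ℝ × ℝ → ℝ × ℝ) (U1 U2 : Set (ℝ × ℝ))
    (hU1 : IsOpen U1) (hU2 : IsOpen U2) (hsqU1 : square ⊆ U1) (hsqU2 : square ⊆ U2)
    (hF1 : ContDiffOn ℝ 1 F1 U1) (hF2 : ContDiffOn ℝ 1 F2 U2)
    (hinj1 : Set.InjOn F1 square) (hinj2 : Set.InjOn F2 square)
    (hjac1 : ∀ x ∈ square, 0 < det2 (pd1 F1 x) (pd2 F1 x))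
    (hjac2 : ∀ x ∈ square, 0 < det2 (pd1 F2 x) (pd2 F2 x))
    (hcompat : ∀ ξ ∈ Set.Icc (0:ℝ) 1, F1 (0, ξ) = F2 (ξ, 0))
    (hinter : F1 '' square ∩ F2 '' square = F1 '' (({0} : Set ℝ) ×ˢ Set.Icc (0:ℝ) 1))
    (Ω : Set (ℝ × ℝ)) (hΩ : Ω = interior (F1 '' square ∪ F2 '' square))
    (α₁ α₂ β₁ β₂ : ℝ → ℝ)
    (hα₁ : ContDiff ℝ 1 α₁) (hα₂ : ContDiff ℝ 1 α₂)
    (hβ₁ : ContDiff ℝ 1 β₁) (hβ₂ : ContDiff ℝ 1 β₂)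
    (hsign : ∀ ξ ∈ Set.Icc (0:ℝ) 1, 0 < α₁ ξ * α₂ ξ)
    (β : ℝ → ℝ) (hβ : β = fun ξ => α₁ ξ * β₂ ξ + α₂ ξ * β₁ ξ)
    (hglueF : ∀ ξ ∈ Set.Icc (0:ℝ) 1,
      α₁ ξ • pd2 F2 (ξ, 0) + α₂ ξ • pd1 F1 (0, ξ) + β ξ • pd2 F1 (0, ξ) = 0)
    (b : ℝ → ℝ) (hb : ContDiff ℝ 2 b)
    (B c₀ c₁ d : ℝ → ℝ)
    (hB : ContDiff ℝ 1 B) (hc₀ : ContDiff ℝ 1 c₀) (hc₁ : ContDiff ℝ 1 c₁)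
    (hd : ContDiff ℝ 1 d)
    (hc₀0 : c₀ 0 = 1) (hc₀'0 : deriv c₀ 0 = 0)
    (hc₁0 : c₁ 0 = 0) (hc₁'0 : deriv c₁ 0 = 1) (hd0 : d 0 = 0)
    (f1 f2 : ℝ × ℝ → ℝ)
    (hf1 : f1 = fun ξ =>
      b ξ.2 * c₀ ξ.1 - β₁ ξ.2 * deriv b ξ.2 * c₁ ξ.1 + α₁ ξ.2 * B ξ.2 * d ξ.1)
    (hf2 : f2 = fun ξ =>
      b ξ.1 * c₀ ξ.2 - β₂ ξ.1 * deriv b ξ.1 * c₁ ξ.2 - α₂ ξ.1 * B ξ.1 * d ξ.2) :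
    (∀ ξ ∈ Set.Icc (0:ℝ) 1, f1 (0, ξ) = f2 (ξ, 0)) ∧
    (∃ φ : ℝ × ℝ → ℝ, ∀ x ∈ square, φ (F1 x) = f1 x ∧ φ (F2 x) = f2 x) ∧
    (∀ φ ψ : ℝ × ℝ → ℝ,
      (∀ x ∈ square, φ (F1 x) = f1 x ∧ φ (F2 x) = f2 x) →
      (∀ x ∈ square, ψ (F1 x) = f1 x ∧ ψ (F2 x) = f2 x) →
      Set.EqOn φ ψ (F1 '' square ∪ F2 '' square)) ∧
    (∀ φ : ℝ × ℝ → ℝ,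
      (∀ x ∈ square, φ (F1 x) = f1 x ∧ φ (F2 x) = f2 x) →
      ContDiffOn ℝ 1 φ Ω) := by
  obtain rfl : f1 = edgeFun c₀ c₁ d b B β₁ α₁ := hf1
  obtain rfl : f2 = edgeFun c₀ c₁ d b B β₂ (-α₂) ∘ Prod.swap := by
    subst hf2
    funext x
    simp only [edgeFun, comp_apply, Prod.fst_swap, Prod.snd_swap, Pi.neg_apply]
    ring
  have htrace (ξ : ℝ) : edgeFun c₀ c₁ d b B β₁ α₁ (0, ξ) = edgeFun c₀ c₁ d b B β₂ (-α₂) (0, ξ) :=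
    (edgeFun_zero_left _ _ _ _ hc₀0 hc₁0 hd0 ξ).trans
      (edgeFun_zero_left _ _ _ _ hc₀0 hc₁0 hd0 ξ).symm
  refine ⟨fun ξ _ => htrace ξ,
    exists_comp_eq_of_edge hinj1 hinj2 hcompat hinter fun ξ _ => htrace ξ, ?_, ?_⟩
  · rintro φ ψ hφ hψ _ (⟨x, hx, rfl⟩ | ⟨x, hx, rfl⟩)
    · exact (hφ x hx).1.trans (hψ x hx).1.symm
    · exact (hφ x hx).2.trans (hψ x hx).2.symm
  · intro φ hφ
    subst hΩ hβ
    refine contDiffOn_interior_of_gluing hU1 hU2 hsqU1 hsqU2 hF1 hF2 hinj1 hinj2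
      (fun x hx => (hjac1 x hx).ne') (fun x hx => (hjac2 x hx).ne') hcompat hinter
      (fun ξ hξ => right_ne_zero_of_mul (hsign ξ hξ).ne') hglueF
      (contDiff_edgeFun _ _ _ _ hc₀ hc₁ hd hb hB hβ₁ hα₁)
      ((contDiff_edgeFun _ _ _ _ hc₀ hc₁ hd hb hB hβ₂ hα₂.neg).comp
        (contDiff_snd.prodMk contDiff_fst))
      (fun ξ _ => ?_) (fun ξ _ => ?_) hφ
    · exact (pd2_edgeFun_zero_left _ _ _ _ hc₀0 hc₁0 hd0 ξ).trans
        (pd2_edgeFun_zero_left _ _ _ _ hc₀0 hc₁0 hd0 ξ).symm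
    · rw [smul_eq_mul, smul_eq_mul, smul_eq_mul]
      exact edgeFun_gluing b B α₁ α₂ β₁ β₂ (hc₀.differentiable one_ne_zero 0)
        (hc₁.differentiable one_ne_zero 0) (hd.differentiable one_ne_zero 0) hc₀0 hc₀'0 hc₁0 hc₁'0
        hd0 ξ

/-- In the two-patch setting with AS-G¹-type gluing data, the pullbacks of a general
element of the edge function space (combination of a trace-type and a
cross-derivative-type edge function) agree on the interface, so they define a unique
function `φ` on `F⁽¹⁾([0,1]²) ∪ F⁽²⁾([0,1]²)`, and `φ` is continuously differentiable
on `Ω`. -/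
theorem stmt9
    (F1 F2 : ℝ × ℝ → ℝ × ℝ) (U1 U2 : Set (ℝ × ℝ))
    (hU1 : IsOpen U1) (hU2 : IsOpen U2) (hsqU1 : square ⊆ U1) (hsqU2 : square ⊆ U2)
    (hF1 : ContDiffOn ℝ 1 F1 U1) (hF2 : ContDiffOn ℝ 1 F2 U2)
    (hinj1 : Set.InjOn F1 square) (hinj2 : Set.InjOn F2 square)
    (hjac1 : ∀ x ∈ square, 0 < det2 (pd1 F1 x) (pd2 F1 x))
    (hjac2 : ∀ x ∈ square, 0 < det2 (pd1 F2 x) (pd2 F2 x))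
    (hcompat : ∀ ξ ∈ Set.Icc (0:ℝ) 1, F1 (0, ξ) = F2 (ξ, 0))
    (hinter : F1 '' square ∩ F2 '' square = F1 '' (({0} : Set ℝ) ×ˢ Set.Icc (0:ℝ) 1))
    (Ω : Set (ℝ × ℝ)) (hΩ : Ω = interior (F1 '' square ∪ F2 '' square))
    (hΩedge : ∀ ξ ∈ Set.Ioo (0:ℝ) 1, F1 (0, ξ) ∈ Ω)
    (α₁ α₂ β₁ β₂ : ℝ → ℝ)
    (hα₁ : ContDiff ℝ 1 α₁) (hα₂ : ContDiff ℝ 1 α₂)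
    (hβ₁ : ContDiff ℝ 1 β₁) (hβ₂ : ContDiff ℝ 1 β₂)
    (hsign : ∀ ξ ∈ Set.Icc (0:ℝ) 1, 0 < α₁ ξ * α₂ ξ)
    (β : ℝ → ℝ) (hβ : β = fun ξ => α₁ ξ * β₂ ξ + α₂ ξ * β₁ ξ)
    (hglueF : ∀ ξ ∈ Set.Icc (0:ℝ) 1,
      α₁ ξ • pd2 F2 (ξ, 0) + α₂ ξ • pd1 F1 (0, ξ) + β ξ • pd2 F1 (0, ξ) = 0)
    (b : ℝ → ℝ) (hb : ContDiff ℝ 2 b)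
    (B c₀ c₁ d : ℝ → ℝ)
    (hB : ContDiff ℝ 1 B) (hc₀ : ContDiff ℝ 1 c₀) (hc₁ : ContDiff ℝ 1 c₁)
    (hd : ContDiff ℝ 1 d)
    (hc₀0 : c₀ 0 = 1) (hc₀'0 : deriv c₀ 0 = 0)
    (hc₁0 : c₁ 0 = 0) (hc₁'0 : deriv c₁ 0 = 1) (hd0 : d 0 = 0)
    (f1 f2 : ℝ × ℝ → ℝ)
    (hf1 : f1 = fun ξ =>
      b ξ.2 * c₀ ξ.1 - β₁ ξ.2 * deriv b ξ.2 * c₁ ξ.1 + α₁ ξ.2 * B ξ.2 * d ξ.1)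
    (hf2 : f2 = fun ξ =>
      b ξ.1 * c₀ ξ.2 - β₂ ξ.1 * deriv b ξ.1 * c₁ ξ.2 - α₂ ξ.1 * B ξ.1 * d ξ.2) :
    (∀ ξ ∈ Set.Icc (0:ℝ) 1, f1 (0, ξ) = f2 (ξ, 0)) ∧
    (∃ φ : ℝ × ℝ → ℝ, ∀ x ∈ square, φ (F1 x) = f1 x ∧ φ (F2 x) = f2 x) ∧
    (∀ φ ψ : ℝ × ℝ → ℝ,
      (∀ x ∈ square, φ (F1 x) = f1 x ∧ φ (F2 x) = f2 x) →
      (∀ x ∈ square, ψ (F1 x) = f1 x ∧ ψ (F2 x) = f2 x) →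
      Set.EqOn φ ψ (F1 '' square ∪ F2 '' square)) ∧
    (∀ φ : ℝ × ℝ → ℝ,
      (∀ x ∈ square, φ (F1 x) = f1 x ∧ φ (F2 x) = f2 x) →
      ContDiffOn ℝ 1 φ Ω) :=
  stmt9_general F1 F2 U1 U2 hU1 hU2 hsqU1 hsqU2 hF1 hF2 hinj1 hinj2 hjac1 hjac2 hcompat hinter Ω hΩ
    α₁ α₂ β₁ β₂ hα₁ hα₂ hβ₁ hβ₂ hsign β hβ hglueF b hb B c₀ c₁ d hB hc₀ hc₁ hd hc₀0 hc₀'0 hc₁0 hc₁'0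
    hd0 f1 f2 hf1 hf2
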